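/- Preservation of algebraic decay of dictionary-based widths under superposition: let c, C, α, ν > 0 and suppose ⌈c m^ν⌉ ≥ m for every integer m ≥ 1. If σ_m(M^{(i)}; ⌈c m^ν⌉) ≤ C m^{−α} for every integer m ≥ 1 and every 1 ≤ i ≤ l, and each M^{(i)} is nonempty and bounded, then for every integer r ≥ 1 that is a multiple of l, σ_r(M; l·⌈c (r/l)^ν⌉) ≤ C l^{1+α} r^{−α}. -/

import Mathlib

open Matrix
open scoped ComplexOrder

noncomputable section

variable {𝕂 : Type*} [RCLike 𝕂]

/-- Canonical ℓ2 inner product on `𝕂^n` (conjugate-linear in the first argument). -/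
def ip2 {n : ℕ} (x y : Fin n → 𝕂) : 𝕂 := star x ⬝ᵥ y

/-- Canonical ℓ2 norm on `𝕂^n`. -/
def norm2 {n : ℕ} (x : Fin n → 𝕂) : ℝ := Real.sqrt (RCLike.re (ip2 x x))

/-- Inner product `⟨x,y⟩_U := ⟨R x, y⟩` on `U = 𝕂^n`. -/
def ipU {n : ℕ} (R : Matrix (Fin n) (Fin n) 𝕂) (x y : Fin n → 𝕂) : 𝕂 := ip2 (R *ᵥ x) y

/-- Norm `‖·‖_U` associated with `⟨·,·⟩_U`. -/
def normU {n : ℕ} (R : Matrix (Fin n) (Fin n) 𝕂) (x : Fin n → 𝕂) : ℝ :=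
  Real.sqrt (RCLike.re (ipU R x x))

/-- Dual inner product `⟨x,y⟩_{U'} := ⟨x, R⁻¹ y⟩` on `U' = 𝕂^n`. -/
def ipDual {n : ℕ} (R : Matrix (Fin n) (Fin n) 𝕂) (x y : Fin n → 𝕂) : 𝕂 := ip2 x (R⁻¹ *ᵥ y)

/-- Dual norm `‖·‖_{U'}`. -/
def normDual {n : ℕ} (R : Matrix (Fin n) (Fin n) 𝕂) (x : Fin n → 𝕂) : ℝ :=
  Real.sqrt (RCLike.re (ipDual R x x))

/-- Sketched semi-inner product `⟨x,y⟩_U^Θ := ⟨Θ x, Θ y⟩`. -/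
def ipUS {n k : ℕ} (Θ : Matrix (Fin k) (Fin n) 𝕂) (x y : Fin n → 𝕂) : 𝕂 :=
  ip2 (Θ *ᵥ x) (Θ *ᵥ y)

/-- Sketched seminorm `‖·‖_U^Θ`. -/
def normUS {n k : ℕ} (Θ : Matrix (Fin k) (Fin n) 𝕂) (x : Fin n → 𝕂) : ℝ :=
  Real.sqrt (RCLike.re (ipUS Θ x x))

/-- Sketched dual seminorm `‖x‖_{U'}^Θ = ‖Θ R⁻¹ x‖`. -/
def normDualS {n k : ℕ} (Θ : Matrix (Fin k) (Fin n) 𝕂) (R : Matrix (Fin n) (Fin n) 𝕂)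
    (x : Fin n → 𝕂) : ℝ :=
  normUS Θ (R⁻¹ *ᵥ x)

/-- `Θ` is an `ε`-embedding for the subspace `V` of `U`. -/
def IsEmb {n k : ℕ} (R : Matrix (Fin n) (Fin n) 𝕂) (Θ : Matrix (Fin k) (Fin n) 𝕂)
    (V : Submodule 𝕂 (Fin n → 𝕂)) (ε : ℝ) : Prop :=
  ∀ x ∈ V, ∀ y ∈ V, ‖ipU R x y - ipUS Θ x y‖ ≤ ε * normU R x * normU R y

/-- Distance (in `‖·‖_U`) from `v` to the subspace `W`; equals `‖v - P_W v‖_U`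
where `P_W` is the `⟨·,·⟩_U`-orthogonal projection onto `W`. -/
def distU {n : ℕ} (R : Matrix (Fin n) (Fin n) 𝕂) (v : Fin n → 𝕂)
    (W : Submodule 𝕂 (Fin n → 𝕂)) : ℝ :=
  sInf {t | ∃ w ∈ W, t = normU R (v - w)}

/-- Set of ratios `num x / den x` over nonzero `x ∈ S`. -/
def ratioSet {n : ℕ} (S : Submodule 𝕂 (Fin n → 𝕂)) (num den : (Fin n → 𝕂) → ℝ) : Set ℝ :=
  {t | ∃ x ∈ S, x ≠ 0 ∧ t = num x / den x}

/-- Library `L_r(D)` of all subspaces spanned by `r` vectors from the dictionary `D`. -/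
def LrD {n : ℕ} (D : Finset (Fin n → 𝕂)) (r : ℕ) : Set (Submodule 𝕂 (Fin n → 𝕂)) :=
  {W | ∃ S : Finset (Fin n → 𝕂), S ⊆ D ∧ S.card = r ∧
    W = Submodule.span 𝕂 (S : Set (Fin n → 𝕂))}

/-- Set of ratios `num x / den x` over nonzero `x ∈ span{u} + W` with `W ∈ L_r(D)`. -/
def dictRatioSet {n : ℕ} (D : Finset (Fin n → 𝕂)) (r : ℕ) (u : Fin n → 𝕂)
    (num den : (Fin n → 𝕂) → ℝ) : Set ℝ :=
  {t | ∃ W ∈ LrD D r, ∃ x ∈ Submodule.span 𝕂 {u} ⊔ W, x ≠ 0 ∧ t = num x / den x}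

/-- The subspace `R_r(U_r) = span {R⁻¹ (b - A x) : x ∈ U_r}`. -/
def RrSub {n : ℕ} (R A : Matrix (Fin n) (Fin n) 𝕂) (b : Fin n → 𝕂)
    (Ur : Submodule 𝕂 (Fin n → 𝕂)) : Submodule 𝕂 (Fin n → 𝕂) :=
  Submodule.span 𝕂 {v | ∃ x ∈ Ur, v = R⁻¹ *ᵥ (b - A *ᵥ x)}

/-- Dictionary-based `r`-width `σ_r(M; K)`. -/
def sigmaW {n : ℕ} (R : Matrix (Fin n) (Fin n) 𝕂) (M : Set (Fin n → 𝕂)) (r K : ℕ) : ℝ :=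
  sInf {t | ∃ D : Finset (Fin n → 𝕂), D.card = K ∧
    t = sSup {s | ∃ v ∈ M, s = sInf {e | ∃ W ∈ LrD D r, e = distU R v W}}}

/-- Nonlinear Kolmogorov `r`-width `d_r(M; m)` with a library of `m` subspaces. -/
def dW {n : ℕ} (R : Matrix (Fin n) (Fin n) 𝕂) (M : Set (Fin n → 𝕂)) (r m : ℕ) : ℝ :=
  sInf {t | ∃ L : Finset (Submodule 𝕂 (Fin n → 𝕂)), L.card = m ∧
    (∀ W ∈ L, Module.finrank 𝕂 ↥W ≤ r) ∧
    t = sSup {s | ∃ v ∈ M, s = sInf {e | ∃ W ∈ L, e = distU R v W}}}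

/-- A posteriori estimator `ω̄` of the embedding constant of `Θ` for `V`,
computed from a second embedding `Θs`. -/
def omegaBar {n k ks : ℕ} (ε : ℝ) (Θ : Matrix (Fin k) (Fin n) 𝕂)
    (Θs : Matrix (Fin ks) (Fin n) 𝕂) (V : Submodule 𝕂 (Fin n → 𝕂)) : ℝ :=
  max (1 - (1 - ε) * sInf {t | ∃ x ∈ V, x ≠ 0 ∧ t = (normUS Θ x / normUS Θs x) ^ 2})
      ((1 + ε) * sSup {t | ∃ x ∈ V, x ≠ 0 ∧ t = (normUS Θ x / normUS Θs x) ^ 2} - 1)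

section Helpers

variable {n : ℕ}

private lemma norm2_eq_norm (x : Fin n → 𝕂) :
    norm2 x = ‖(WithLp.equiv 2 (Fin n → 𝕂)).symm x‖ := by
  rw [norm2, ip2, dotProduct, EuclideanSpace.norm_eq]
  congr 1
  rw [map_sum]
  refine Finset.sum_congr rfl fun i _ => ?_
  simp only [WithLp.equiv_symm_apply, PiLp.toLp_apply, Pi.star_apply, RCLike.star_def, RCLike.conj_mul]
  norm_cast

private lemma norm2_add_le (x y : Fin n → 𝕂) : norm2 (x + y) ≤ norm2 x + norm2 y := by
  rw [norm2_eq_norm, norm2_eq_norm, norm2_eq_norm, WithLp.equiv_symm_apply, WithLp.toLp_add]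
  exact norm_add_le _ _

open scoped MatrixOrder in
private lemma normU_eq_sqrt {R : Matrix (Fin n) (Fin n) 𝕂} (hR : R.PosSemidef)
    (x : Fin n → 𝕂) : normU R x = norm2 (CFC.sqrt R *ᵥ x) := by
  have hS : CFC.sqrt R * CFC.sqrt R = R := CFC.sqrt_mul_sqrt_self R hR.nonneg
  have hH : (CFC.sqrt R).conjTranspose = CFC.sqrt R := (CFC.sqrt_nonneg R).posSemidef.1
  rw [normU, norm2, ipU, ip2, ip2]
  have key : star (R *ᵥ x) ⬝ᵥ x = star (CFC.sqrt R *ᵥ x) ⬝ᵥ (CFC.sqrt R *ᵥ x) := by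
    conv_lhs =>
      rw [show R *ᵥ x = CFC.sqrt R *ᵥ (CFC.sqrt R *ᵥ x) from by rw [Matrix.mulVec_mulVec, hS]]
    rw [Matrix.star_mulVec, hH, ← Matrix.dotProduct_mulVec]
  rw [key]

private lemma normU_nonneg (R : Matrix (Fin n) (Fin n) 𝕂) (x : Fin n → 𝕂) :
    0 ≤ normU R x := Real.sqrt_nonneg _

private lemma normU_zero (R : Matrix (Fin n) (Fin n) 𝕂) : normU R (0 : Fin n → 𝕂) = 0 := by
  simp [normU, ipU, ip2]

private lemma normU_add_le {R : Matrix (Fin n) (Fin n) 𝕂} (hR : R.PosSemidef)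
    (x y : Fin n → 𝕂) : normU R (x + y) ≤ normU R x + normU R y := by
  rw [normU_eq_sqrt hR, normU_eq_sqrt hR, normU_eq_sqrt hR, Matrix.mulVec_add]
  exact norm2_add_le _ _

private lemma normU_sum_le {R : Matrix (Fin n) (Fin n) 𝕂} (hR : R.PosSemidef)
    {ι : Type*} (s : Finset ι) (f : ι → Fin n → 𝕂) :
    normU R (∑ i ∈ s, f i) ≤ ∑ i ∈ s, normU R (f i) := by
  classical
  induction s using Finset.cons_induction with
  | empty => simp [normU_zero]
  | cons a s ha ih =>
      rw [Finset.sum_cons, Finset.sum_cons]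
      exact (normU_add_le hR _ _).trans (by linarith)

private lemma distU_bddBelow (R : Matrix (Fin n) (Fin n) 𝕂) (v : Fin n → 𝕂)
    (W : Submodule 𝕂 (Fin n → 𝕂)) :
    BddBelow {t | ∃ w ∈ W, t = normU R (v - w)} :=
  ⟨0, by rintro t ⟨w, _, rfl⟩; exact normU_nonneg _ _⟩

private lemma distU_nonneg (R : Matrix (Fin n) (Fin n) 𝕂) (v : Fin n → 𝕂)
    (W : Submodule 𝕂 (Fin n → 𝕂)) : 0 ≤ distU R v W :=
  Real.sInf_nonneg (by rintro t ⟨w, _, rfl⟩; exact normU_nonneg _ _)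

private lemma distU_le (R : Matrix (Fin n) (Fin n) 𝕂) (v w : Fin n → 𝕂)
    (W : Submodule 𝕂 (Fin n → 𝕂)) (hw : w ∈ W) : distU R v W ≤ normU R (v - w) :=
  csInf_le (distU_bddBelow R v W) ⟨w, hw, rfl⟩

private lemma distU_le_normU (R : Matrix (Fin n) (Fin n) 𝕂) (v : Fin n → 𝕂)
    (W : Submodule 𝕂 (Fin n → 𝕂)) : distU R v W ≤ normU R v := by
  have := distU_le R v 0 W W.zero_mem
  rwa [sub_zero] at this

end Helpers

/-- Preservation of algebraic decay of dictionary-based widths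
under superposition. -/
theorem dictionary_width_algebraic_decay {𝕂 : Type*} [RCLike 𝕂] {n l : ℕ} (hl : 1 ≤ l)
    (R : Matrix (Fin n) (Fin n) 𝕂) (hR : R.PosDef)
    {P : Type*} (uu : Fin l → P → (Fin n → 𝕂))
    (hne : ∀ i, (Set.range (uu i)).Nonempty)
    (hbdd : ∀ i, ∃ C : ℝ, ∀ v ∈ Set.range (uu i), normU R v ≤ C)
    (c C α ν : ℝ) (hc : 0 < c) (hC : 0 < C) (hα : 0 < α) (hν : 0 < ν)
    (hceil : ∀ m : ℕ, 1 ≤ m → m ≤ ⌈c * (m : ℝ) ^ ν⌉₊)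
    (hdecay : ∀ m : ℕ, 1 ≤ m → ∀ i,
      sigmaW R (Set.range (uu i)) m ⌈c * (m : ℝ) ^ ν⌉₊ ≤ C * (m : ℝ) ^ (-α))
    (r : ℕ) (hr : 1 ≤ r) (hdvd : l ∣ r) :
    sigmaW R {x | ∃ μ : P, x = ∑ i, uu i μ} r (l * ⌈c * ((r / l : ℕ) : ℝ) ^ ν⌉₊)
      ≤ C * (l : ℝ) ^ ((1 : ℝ) + α) * (r : ℝ) ^ (-α) := by
  classical
  set m := r / l with hm_def
  have hlm : l * m = r := Nat.mul_div_cancel' hdvd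
  have hl0 : (0 : ℝ) < l := by exact_mod_cast hl
  have hr0 : (0 : ℝ) < r := by exact_mod_cast hr
  have hm1 : 1 ≤ m := by
    rcases Nat.eq_zero_or_pos m with h | h
    · rw [h, mul_zero] at hlm; omega
    · exact h
  set K := ⌈c * (m : ℝ) ^ ν⌉₊ with hK_def
  have hmK : m ≤ K := hceil m hm1
  have hmR : (m : ℝ) = (r : ℝ) / (l : ℝ) := by
    rw [hm_def, Nat.cast_div hdvd (by positivity)]
  have hrpow : ((m : ℝ)) ^ (-α) = (r : ℝ) ^ (-α) * (l : ℝ) ^ α := by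
    rw [hmR, Real.div_rpow hr0.le hl0.le, Real.rpow_neg hl0.le, div_eq_mul_inv, inv_inv]
  have hRHS : C * (l : ℝ) ^ ((1 : ℝ) + α) * (r : ℝ) ^ (-α) = l * (C * (m : ℝ) ^ (-α)) := by
    rw [hrpow, Real.rpow_add hl0, Real.rpow_one]
    ring
  rw [hRHS]
  rcases Nat.eq_zero_or_pos n with hn | hn
  · -- trivial case: the ambient space is zero-dimensional
    subst hn
    have hnorm : ∀ x : Fin 0 → 𝕂, normU R x = 0 := by
      intro x; simp [normU, ipU, ip2, dotProduct]
    have hd : ∀ (v : Fin 0 → 𝕂) (W : Submodule 𝕂 (Fin 0 → 𝕂)), distU R v W = 0 := by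
      intro v W
      have hset : {t | ∃ w ∈ W, t = normU R (v - w)} = {0} := by
        ext t
        simp only [Set.mem_setOf_eq, Set.mem_singleton_iff, hnorm]
        exact ⟨fun ⟨w, _, h⟩ => h, fun h => ⟨0, W.zero_mem, h⟩⟩
      rw [distU, hset, csInf_singleton]
    have hle0 : sigmaW R {x | ∃ μ : P, x = ∑ i, uu i μ} r (l * K) ≤ 0 := by
      rw [sigmaW]
      have hsub : {t | ∃ D : Finset (Fin 0 → 𝕂), D.card = l * K ∧
          t = sSup {s | ∃ v ∈ {x | ∃ μ : P, x = ∑ i, uu i μ}, s =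
            sInf {e | ∃ W ∈ LrD D r, e = distU R v W}}} ⊆ {0} := by
        rintro t ⟨D, _, rfl⟩
        have hS : {s | ∃ v ∈ {x | ∃ μ : P, x = ∑ i, uu i μ}, s =
            sInf {e | ∃ W ∈ LrD D r, e = distU R v W}} ⊆ {0} := by
          rintro s ⟨v, _, rfl⟩
          have hE : {e | ∃ W ∈ LrD D r, e = distU R v W} ⊆ {0} := by
            rintro e ⟨W, _, rfl⟩; exact hd v W
          rw [Set.mem_singleton_iff]
          rcases Set.subset_singleton_iff_eq.mp hE with h | h
          · rw [h]; exact Real.sInf_empty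
          · rw [h]; exact csInf_singleton 0
        rw [Set.mem_singleton_iff]
        rcases Set.subset_singleton_iff_eq.mp hS with h | h
        · rw [h]; exact Real.sSup_empty
        · rw [h]; exact csSup_singleton 0
      rcases Set.subset_singleton_iff_eq.mp hsub with h | h
      · rw [h]; exact le_of_eq Real.sInf_empty
      · rw [h]; exact le_of_eq (csInf_singleton 0)
    exact hle0.trans (by positivity)
  · -- main case
    haveI : Infinite (Fin n → 𝕂) :=
      Infinite.of_injective (fun k : ℕ => (fun _ => (k : 𝕂) : Fin n → 𝕂)) (by
        intro a b hab
        have h2 : (a : 𝕂) = (b : 𝕂) := congrFun hab ⟨0, hn⟩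
        exact_mod_cast h2)
    refine le_of_forall_pos_le_add fun ε hε => ?_
    set δ := ε / (2 * l) with hδ_def
    have hδ0 : 0 < δ := by positivity
    -- choose near-optimal dictionaries for each component
    have key : ∀ i : Fin l, ∃ D : Finset (Fin n → 𝕂), D.card = K ∧
        sSup {s | ∃ v ∈ Set.range (uu i), s =
          sInf {e | ∃ W ∈ LrD D m, e = distU R v W}} < C * (m : ℝ) ^ (-α) + δ := by
      intro i
      have hTne : {t | ∃ D : Finset (Fin n → 𝕂), D.card = K ∧
          t = sSup {s | ∃ v ∈ Set.range (uu i), s =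
            sInf {e | ∃ W ∈ LrD D m, e = distU R v W}}}.Nonempty := by
        obtain ⟨D, hD⟩ := Infinite.exists_subset_card_eq (Fin n → 𝕂) K
        exact ⟨_, D, hD, rfl⟩
      obtain ⟨a, ⟨D, hD, rfl⟩, ha⟩ := Real.lt_sInf_add_pos hTne hδ0
      have hdec := hdecay m hm1 i
      rw [sigmaW] at hdec
      exact ⟨D, hD, ha.trans_le (by linarith)⟩
    choose D hDcard hDlt using key
    -- combine the dictionaries
    obtain ⟨Dall, hsub, hDallcard⟩ :=
      Infinite.exists_superset_card_eq (Finset.univ.biUnion D) (l * K) (by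
        calc (Finset.univ.biUnion D).card ≤ ∑ i, (D i).card := Finset.card_biUnion_le
          _ = l * K := by simp [hDcard, Finset.sum_const, mul_comm])
    rw [sigmaW]
    have hbddT : BddBelow {t | ∃ Dx : Finset (Fin n → 𝕂), Dx.card = l * K ∧
        t = sSup {s | ∃ v ∈ {x | ∃ μ : P, x = ∑ i, uu i μ}, s =
          sInf {e | ∃ W ∈ LrD Dx r, e = distU R v W}}} := by
      refine ⟨0, ?_⟩
      rintro t ⟨Dx, _, rfl⟩
      refine Real.sSup_nonneg ?_
      rintro s ⟨v, _, rfl⟩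
      refine Real.sInf_nonneg ?_
      rintro e ⟨W, _, rfl⟩
      exact distU_nonneg R v W
    refine csInf_le_of_le hbddT ⟨Dall, hDallcard, rfl⟩ ?_
    refine Real.sSup_le ?_ (by positivity)
    rintro s ⟨v, ⟨μ, rfl⟩, rfl⟩
    -- for each component, find a good subspace from the dictionary
    have hstep : ∀ i : Fin l, ∃ F : Finset (Fin n → 𝕂), F ⊆ D i ∧ F.card = m ∧
        ∃ w ∈ Submodule.span 𝕂 (F : Set (Fin n → 𝕂)),
          normU R (uu i μ - w) < C * (m : ℝ) ^ (-α) + 2 * δ := by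
      intro i
      obtain ⟨F₀, hF₀sub, hF₀card⟩ := Finset.exists_subset_card_eq (s := D i) (n := m) (by
        rw [hDcard]; exact hmK)
      have hW₀ : Submodule.span 𝕂 (F₀ : Set (Fin n → 𝕂)) ∈ LrD (D i) m :=
        ⟨F₀, hF₀sub, hF₀card, rfl⟩
      have hEne : {e | ∃ W ∈ LrD (D i) m, e = distU R (uu i μ) W}.Nonempty :=
        ⟨_, _, hW₀, rfl⟩
      have hEbdd : BddBelow {e | ∃ W ∈ LrD (D i) m, e = distU R (uu i μ) W} := by
        refine ⟨0, ?_⟩; rintro e ⟨W, _, rfl⟩; exact distU_nonneg R _ W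
      -- the inf over the library is in the sup set for component i
      obtain ⟨Ci, hCi⟩ := hbdd i
      have hSbdd : BddAbove {s | ∃ v ∈ Set.range (uu i), s =
          sInf {e | ∃ W ∈ LrD (D i) m, e = distU R v W}} := by
        refine ⟨Ci, ?_⟩
        rintro s ⟨v', hv', rfl⟩
        calc sInf {e | ∃ W ∈ LrD (D i) m, e = distU R v' W}
            ≤ distU R v' (Submodule.span 𝕂 (F₀ : Set (Fin n → 𝕂))) := by
              refine csInf_le ⟨0, ?_⟩ ⟨_, hW₀, rfl⟩
              rintro e ⟨W, _, rfl⟩; exact distU_nonneg R v' W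
          _ ≤ normU R v' := distU_le_normU R v' _
          _ ≤ Ci := hCi v' hv'
      have h1 : sInf {e | ∃ W ∈ LrD (D i) m, e = distU R (uu i μ) W}
          ≤ sSup {s | ∃ v ∈ Set.range (uu i), s =
            sInf {e | ∃ W ∈ LrD (D i) m, e = distU R v W}} :=
        le_csSup hSbdd ⟨uu i μ, ⟨μ, rfl⟩, rfl⟩
      have h2 : sInf {e | ∃ W ∈ LrD (D i) m, e = distU R (uu i μ) W}
          < C * (m : ℝ) ^ (-α) + δ := lt_of_le_of_lt h1 (hDlt i)
      obtain ⟨e, ⟨W, hWmem, rfl⟩, helt⟩ := Real.lt_sInf_add_pos hEne hδ0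
      have hdlt : distU R (uu i μ) W < C * (m : ℝ) ^ (-α) + 2 * δ := by linarith
      have hdne : {t | ∃ w ∈ W, t = normU R (uu i μ - w)}.Nonempty :=
        ⟨_, 0, W.zero_mem, rfl⟩
      have hgap : 0 < C * (m : ℝ) ^ (-α) + 2 * δ - distU R (uu i μ) W := by linarith
      obtain ⟨t, ⟨w, hw, rfl⟩, hwlt⟩ := Real.lt_sInf_add_pos hdne hgap
      rw [← distU] at hwlt
      obtain ⟨F, hFsub, hFcard, rfl⟩ := hWmem
      exact ⟨F, hFsub, hFcard, w, hw, by linarith⟩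
    choose F hFsub hFcard w hwmem hwlt using hstep
    -- assemble a single subspace of dimension r
    obtain ⟨G, hFG, hGsub, hGcard⟩ := Finset.exists_subsuperset_card_eq
      (s := Finset.univ.biUnion F) (t := Dall) (n := r)
      (Finset.biUnion_subset.mpr fun i _ => (hFsub i).trans
        ((Finset.subset_biUnion_of_mem D (Finset.mem_univ i)).trans hsub))
      (Finset.card_biUnion_le.trans (by simp [hFcard, Finset.sum_const, mul_comm, hlm]))
      (by rw [hDallcard, ← hlm]; exact Nat.mul_le_mul_left l hmK)
    have hWL : Submodule.span 𝕂 (G : Set (Fin n → 𝕂)) ∈ LrD Dall r := ⟨G, hGsub, hGcard, rfl⟩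
    have hwW : ∀ i, w i ∈ Submodule.span 𝕂 (G : Set (Fin n → 𝕂)) := fun i =>
      Submodule.span_mono (by
        exact_mod_cast (Finset.subset_biUnion_of_mem F (Finset.mem_univ i)).trans hFG)
        (hwmem i)
    have hsumW : (∑ i, w i) ∈ Submodule.span 𝕂 (G : Set (Fin n → 𝕂)) :=
      Submodule.sum_mem _ fun i _ => hwW i
    calc sInf {e | ∃ W ∈ LrD Dall r, e = distU R (∑ i, uu i μ) W}
        ≤ distU R (∑ i, uu i μ) (Submodule.span 𝕂 (G : Set (Fin n → 𝕂))) := by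
          refine csInf_le ⟨0, ?_⟩ ⟨_, hWL, rfl⟩
          rintro e ⟨W, _, rfl⟩; exact distU_nonneg R _ W
      _ ≤ normU R ((∑ i, uu i μ) - ∑ i, w i) := distU_le R _ _ _ hsumW
      _ = normU R (∑ i, (uu i μ - w i)) := by rw [Finset.sum_sub_distrib]
      _ ≤ ∑ i, normU R (uu i μ - w i) := normU_sum_le hR.posSemidef _ _
      _ ≤ ∑ _i : Fin l, (C * (m : ℝ) ^ (-α) + 2 * δ) :=
          Finset.sum_le_sum fun i _ => (hwlt i).le
      _ = l * (C * (m : ℝ) ^ (-α) + 2 * δ) := by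
          rw [Finset.sum_const, Finset.card_univ, Fintype.card_fin, nsmul_eq_mul]
      _ = l * (C * (m : ℝ) ^ (-α)) + ε := by
          rw [hδ_def]; field_simp

end
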